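/- arXiv:2101.07794 — 5 statements merged into one kernel-verified Lean document; each statement's English description precedes it below -/
import Mathlib

section
/- Let $A$ be a positive semidefinite random $d\times d$ matrix with $\mathbb{A} = \mathbb{E}[A]$ positive definite, and suppose there is $L > 0$ such that $\mathbb{E}[\langle Ax, x\rangle^2]^{1/4} \leq L$ for all $x$ with $\langle \mathbb{A}x,x\rangle = 1$. Then $\|\mathbb{E}[A\mathbb{A}^{-1}A]\|_{\mathrm{op}} \leq d L^4$, where $\|\cdot\|_{\mathrm{op}}$ is the operator norm with respect to the norm $\|x\| = \langle \mathbb{A}x,x\rangle^{1/2}$. -/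
/-!
Write `𝔸⁻¹ = TᵀT` with `T𝔸Tᵀ = 1`, so that the rows `tᵢ` of `T` are unit vectors for the norm
of `𝔸`. Then `⟨A𝔸⁻¹Ax, x⟩ = ∑ᵢ ⟨Atᵢ, x⟩²`, and Cauchy-Schwarz for the form of `A` bounds this by
`f⋅⟨Ax, x⟩` with `f = ∑ᵢ ⟨Atᵢ, tᵢ⟩ = tr(𝔸⁻¹A)`. Cauchy-Schwarz in `L²` gives
`E[f⟨Ax, x⟩] ≤ E[f²]^{1/2} E[⟨Ax, x⟩²]^{1/2}`, and the norm equivalence bounds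
`E[f²] ≤ d ∑ᵢ E[⟨Atᵢ, tᵢ⟩²] ≤ d² L⁴` and `E[⟨Ax, x⟩²] ≤ L⁴ ⟨𝔸x, x⟩²`. Hence
`⟨E[A𝔸⁻¹A]x, x⟩ ≤ d L⁴ ⟨𝔸x, x⟩`, and a positive semidefinite matrix with this bound has
operator norm at most `d L⁴`.
-/

open MeasureTheory ProbabilityTheory Matrix

/-- The operator norm of a `d × d` matrix `B` with respect to the norm
`x ↦ ⟨𝔸x, x⟩^{1/2}` endowed by a positive definite matrix `𝔸`. -/
noncomputable def opNormWrt {d : ℕ} (Abar B : Matrix (Fin d) (Fin d) ℝ) : ℝ :=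
  sSup {t | ∃ x y : Fin d → ℝ,
    Abar.mulVec x ⬝ᵥ x ≤ 1 ∧ Abar.mulVec y ⬝ᵥ y ≤ 1 ∧ t = B.mulVec x ⬝ᵥ y}

/-- The entrywise expectation of a random matrix. -/
noncomputable def matExp {Ω : Type*} [MeasureSpace Ω] {d : ℕ}
    (A : Ω → Matrix (Fin d) (Fin d) ℝ) : Matrix (Fin d) (Fin d) ℝ :=
  Matrix.of fun i j => ∫ ω, A ω i j ∂(MeasureTheory.volume : Measure Ω)

namespace Matrix

variable {n : Type*} [Fintype n]

lemma mulVec_dotProduct_eq_sum (M : Matrix n n ℝ) (x y : n → ℝ) :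
    M *ᵥ x ⬝ᵥ y = ∑ i, ∑ j, x j * y i * M i j := by
  simp only [mulVec, dotProduct, Finset.sum_mul]
  exact Finset.sum_congr rfl fun i _ => Finset.sum_congr rfl fun j _ => by ring

lemma mulVec_row_dotProduct_row (B T : Matrix n n ℝ) (i : n) :
    B *ᵥ T i ⬝ᵥ T i = (T * B * Tᵀ) i i := by
  simp only [mul_apply, mulVec, dotProduct, transpose_apply, Finset.sum_mul]
  rw [Finset.sum_comm]
  exact Finset.sum_congr rfl fun j _ => Finset.sum_congr rfl fun k _ => by ring

lemma transpose_mul_self_mulVec_dotProduct (B : Matrix n n ℝ) (x : n → ℝ) :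
    (Bᵀ * B) *ᵥ x ⬝ᵥ x = B *ᵥ x ⬝ᵥ B *ᵥ x := by
  rw [← mulVec_mulVec, dotProduct_comm, dotProduct_transpose_mulVec]

lemma IsHermitian.mulVec_dotProduct_comm {S : Matrix n n ℝ} (hS : S.IsHermitian) (x y : n → ℝ) :
    S *ᵥ x ⬝ᵥ y = S *ᵥ y ⬝ᵥ x := by
  rw [dotProduct_comm, ← dotProduct_transpose_mulVec, ← conjTranspose_eq_transpose_of_trivial, hS,
    dotProduct_comm]

lemma IsHermitian.mul_transpose_mul_self_mul_mulVec_dotProduct {S : Matrix n n ℝ}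
    (hS : S.IsHermitian) (T : Matrix n n ℝ) (x : n → ℝ) :
    (S * (Tᵀ * T) * S) *ᵥ x ⬝ᵥ x = ∑ i, (S *ᵥ T i ⬝ᵥ x) ^ 2 := by
  have hS' : Sᵀ = S := by rw [← conjTranspose_eq_transpose_of_trivial, hS]
  have hrow : ∀ i, ((T * S) *ᵥ x) i = S *ᵥ T i ⬝ᵥ x := fun i => by
    rw [← mulVec_mulVec, hS.mulVec_dotProduct_comm, dotProduct_comm]; rfl
  rw [show S * (Tᵀ * T) * S = (T * S)ᵀ * (T * S) by
    rw [transpose_mul, hS', Matrix.mul_assoc, Matrix.mul_assoc, Matrix.mul_assoc],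
    transpose_mul_self_mulVec_dotProduct]
  simp only [dotProduct, hrow, sq]

lemma PosSemidef.mulVec_dotProduct_self_nonneg {S : Matrix n n ℝ} (hS : S.PosSemidef)
    (x : n → ℝ) : 0 ≤ S *ᵥ x ⬝ᵥ x := by
  simpa [dotProduct_comm] using hS.dotProduct_mulVec_nonneg x

lemma PosSemidef.mulVec_dotProduct_sq_le {S : Matrix n n ℝ} (hS : S.PosSemidef) (x y : n → ℝ) :
    (S *ᵥ x ⬝ᵥ y) ^ 2 ≤ (S *ᵥ x ⬝ᵥ x) * (S *ᵥ y ⬝ᵥ y) := by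
  classical
  have := LinearMap.BilinForm.apply_mul_apply_le_of_forall_zero_le (toLinearMap₂' ℝ S)
    (fun v => by simpa [toLinearMap₂'_apply', dotProduct_comm v] using
      hS.mulVec_dotProduct_self_nonneg v) x y
  simp only [toLinearMap₂'_apply'] at this
  rwa [dotProduct_comm x (S *ᵥ y), dotProduct_comm y (S *ᵥ x), dotProduct_comm y (S *ᵥ y),
    dotProduct_comm x (S *ᵥ x), ← hS.1.mulVec_dotProduct_comm, ← sq] at this

lemma PosSemidef.mul_transpose_mul_self_mul_mulVec_dotProduct_le {S : Matrix n n ℝ}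
    (hS : S.PosSemidef) (T : Matrix n n ℝ) (x : n → ℝ) :
    (S * (Tᵀ * T) * S) *ᵥ x ⬝ᵥ x ≤ (∑ i, S *ᵥ T i ⬝ᵥ T i) * (S *ᵥ x ⬝ᵥ x) := by
  rw [hS.1.mul_transpose_mul_self_mul_mulVec_dotProduct, Finset.sum_mul]
  exact Finset.sum_le_sum fun i _ => hS.mulVec_dotProduct_sq_le (T i) x

lemma PosDef.exists_inv_eq_transpose_mul_self [DecidableEq n] {𝔸 : Matrix n n ℝ}
    (h𝔸 : 𝔸.PosDef) : ∃ T : Matrix n n ℝ, 𝔸⁻¹ = Tᵀ * T ∧ T * 𝔸 * Tᵀ = 1 := by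
  open scoped MatrixOrder in
  obtain ⟨B, hB⟩ := CStarAlgebra.nonneg_iff_eq_star_mul_self.mp h𝔸.posSemidef.nonneg
  rw [star_eq_conjTranspose, conjTranspose_eq_transpose_of_trivial] at hB
  have hBdet : IsUnit Bᵀ.det :=
    (isUnit_iff_isUnit_det _).mp (isUnit_of_mul_isUnit_left (hB ▸ h𝔸.isUnit))
  refine ⟨Bᵀ⁻¹, ?_, ?_⟩
  · rw [hB, transpose_nonsing_inv, transpose_transpose, Matrix.mul_inv_rev]
  · rw [hB, transpose_nonsing_inv, transpose_transpose, ← Matrix.mul_assoc,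
      nonsing_inv_mul _ hBdet, Matrix.one_mul, mul_nonsing_inv]
    rwa [det_transpose] at hBdet

end Matrix

section Integrals

variable {Ω : Type*} [MeasurableSpace Ω] {μ : Measure Ω}

lemma MeasureTheory.MemLp.mulVec_dotProduct {n : Type*} [Fintype n] {p : ENNReal}
    {A : Ω → Matrix n n ℝ} (hA : ∀ i j, MemLp (fun ω => A ω i j) p μ) (x y : n → ℝ) :
    MemLp (fun ω => A ω *ᵥ x ⬝ᵥ y) p μ := by
  simp only [mulVec_dotProduct_eq_sum]
  exact memLp_finsetSum _ fun i _ => memLp_finsetSum _ fun j _ => (hA i j).const_mul _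

lemma integral_mulVec_dotProduct {n : Type*} [Fintype n] {A : Ω → Matrix n n ℝ}
    (hA : ∀ i j, Integrable (fun ω => A ω i j) μ) (x y : n → ℝ) :
    ∫ ω, A ω *ᵥ x ⬝ᵥ y ∂μ = (of fun i j => ∫ ω, A ω i j ∂μ) *ᵥ x ⬝ᵥ y := by
  simp only [mulVec_dotProduct_eq_sum, of_apply]
  rw [integral_finsetSum _ fun i _ => integrable_finsetSum _ fun j _ => (hA i j).const_mul _]
  refine Finset.sum_congr rfl fun i _ => ?_
  rw [integral_finsetSum _ fun j _ => (hA i j).const_mul _]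
  exact Finset.sum_congr rfl fun j _ => integral_const_mul _ _

lemma integral_mul_sq_le {f g : Ω → ℝ} (hf : MemLp f 2 μ) (hg : MemLp g 2 μ) :
    (∫ ω, f ω * g ω ∂μ) ^ 2 ≤ (∫ ω, f ω ^ 2 ∂μ) * ∫ ω, g ω ^ 2 ∂μ := by
  have hinner : ∀ {u v : Ω → ℝ} (hu : MemLp u 2 μ) (hv : MemLp v 2 μ),
      inner ℝ (hu.toLp u) (hv.toLp v) = ∫ ω, u ω * v ω ∂μ := fun hu hv => by
    rw [L2.inner_def]
    refine integral_congr_ae ?_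
    filter_upwards [hu.coeFn_toLp, hv.coeFn_toLp] with ω hu' hv'
    simp [hu', hv', mul_comm]
  simpa only [hinner, ← sq] using real_inner_mul_inner_self_le (hf.toLp f) (hg.toLp g)

lemma integral_sum_sq_le {ι : Type*} (s : Finset ι) {f : ι → Ω → ℝ}
    (hf : ∀ i ∈ s, MemLp (f i) 2 μ) :
    ∫ ω, (∑ i ∈ s, f i ω) ^ 2 ∂μ ≤ s.card * ∑ i ∈ s, ∫ ω, f i ω ^ 2 ∂μ := by
  have hsq : ∀ i ∈ s, Integrable (fun ω => f i ω ^ 2) μ := fun i hi => (hf i hi).integrable_sq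
  rw [← integral_finsetSum _ hsq, ← integral_const_mul]
  exact integral_mono (memLp_finsetSum s hf).integrable_sq
    ((integrable_finsetSum _ hsq).const_mul _) fun ω => sq_sum_le_card_mul_sum_sq

end Integrals

lemma matExp_mulVec_dotProduct {Ω : Type*} [MeasureSpace Ω] {d : ℕ}
    {A : Ω → Matrix (Fin d) (Fin d) ℝ} (hA : ∀ i j, Integrable (fun ω => A ω i j))
    (x y : Fin d → ℝ) : matExp A *ᵥ x ⬝ᵥ y = ∫ ω, A ω *ᵥ x ⬝ᵥ y :=
  (integral_mulVec_dotProduct hA x y).symm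

lemma posSemidef_matExp {Ω : Type*} [MeasureSpace Ω] {d : ℕ}
    {A : Ω → Matrix (Fin d) (Fin d) ℝ} (hA : ∀ ω, (A ω).PosSemidef)
    (hint : ∀ i j, Integrable (fun ω => A ω i j)) : (matExp A).PosSemidef := by
  refine .of_dotProduct_mulVec_nonneg ?_ fun x => ?_
  · ext i j
    simp only [conjTranspose_apply, star_trivial, matExp, of_apply]
    exact integral_congr_ae (.of_forall fun ω => (hA ω).1.apply i j)
  · rw [star_trivial, dotProduct_comm, matExp_mulVec_dotProduct hint]
    exact integral_nonneg fun ω => (hA ω).mulVec_dotProduct_self_nonneg x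

lemma opNormWrt_le_of_posSemidef {d : ℕ} {𝔸 M : Matrix (Fin d) (Fin d) ℝ} (hM : M.PosSemidef)
    {c : ℝ} (hc : 0 ≤ c) (h : ∀ x, M *ᵥ x ⬝ᵥ x ≤ c * (𝔸 *ᵥ x ⬝ᵥ x)) : opNormWrt 𝔸 M ≤ c := by
  have hball : ∀ x, 𝔸 *ᵥ x ⬝ᵥ x ≤ 1 → M *ᵥ x ⬝ᵥ x ≤ c := fun x hx =>
    (h x).trans (mul_le_of_le_one_right hc hx)
  refine Real.sSup_le ?_ hc
  rintro t ⟨x, y, hx, hy, rfl⟩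
  refine (le_abs_self _).trans (abs_le_of_sq_le_sq ?_ hc)
  calc (M *ᵥ x ⬝ᵥ y) ^ 2 ≤ (M *ᵥ x ⬝ᵥ x) * (M *ᵥ y ⬝ᵥ y) := hM.mulVec_dotProduct_sq_le x y
    _ ≤ c * c := mul_le_mul (hball x hx) (hball y hy) (hM.mulVec_dotProduct_self_nonneg y) hc
    _ = c ^ 2 := (sq c).symm

section NormEquivalence

variable {Ω : Type*} [MeasurableSpace Ω] {μ : Measure Ω} {n : Type*} [Fintype n]
  {A : Ω → Matrix n n ℝ} {𝔸 : Matrix n n ℝ} {L : ℝ}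

lemma integral_sq_le_of_norm_equiv (h𝔸 : 𝔸.PosDef)
    (h : ∀ x, 𝔸 *ᵥ x ⬝ᵥ x = 1 → (∫ ω, (A ω *ᵥ x ⬝ᵥ x) ^ 2 ∂μ) ^ ((1 : ℝ) / 4) ≤ L)
    (x : n → ℝ) : ∫ ω, (A ω *ᵥ x ⬝ᵥ x) ^ 2 ∂μ ≤ L ^ 4 * (𝔸 *ᵥ x ⬝ᵥ x) ^ 2 := by
  rcases eq_or_ne x 0 with rfl | hx
  · simp
  have hq : 0 < 𝔸 *ᵥ x ⬝ᵥ x := by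
    rw [dotProduct_comm]; simpa using h𝔸.dotProduct_mulVec_pos hx
  set q := 𝔸 *ᵥ x ⬝ᵥ x
  have hscale : ∀ M : Matrix n n ℝ, M *ᵥ ((√q)⁻¹ • x) ⬝ᵥ (√q)⁻¹ • x = q⁻¹ * (M *ᵥ x ⬝ᵥ x) := by
    intro M
    rw [mulVec_smul, smul_dotProduct, dotProduct_smul, smul_eq_mul, smul_eq_mul, ← mul_assoc,
      ← mul_inv, Real.mul_self_sqrt hq.le]
  have hI : ∫ ω, (A ω *ᵥ ((√q)⁻¹ • x) ⬝ᵥ (√q)⁻¹ • x) ^ 2 ∂μ ≤ L ^ 4 := by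
    have hnn : 0 ≤ ∫ ω, (A ω *ᵥ ((√q)⁻¹ • x) ⬝ᵥ (√q)⁻¹ • x) ^ 2 ∂μ :=
      integral_nonneg fun ω => sq_nonneg _
    have h1 := h _ ((hscale 𝔸).trans (inv_mul_cancel₀ hq.ne'))
    rw [one_div] at h1
    have h4 := (Real.rpow_inv_le_iff_of_pos hnn ((Real.rpow_nonneg hnn _).trans h1) four_pos).mp h1
    exact_mod_cast h4
  simp only [hscale, mul_pow, integral_const_mul, inv_pow] at hI
  rwa [inv_mul_le_iff₀ (by positivity), mul_comm] at hI

lemma integral_mul_transpose_mul_self_mul_le [DecidableEq n] (hA : ∀ ω, (A ω).PosSemidef)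
    (hL2 : ∀ i j, MemLp (fun ω => A ω i j) 2 μ) (h𝔸 : 𝔸.PosSemidef) {T : Matrix n n ℝ}
    (hT : T * 𝔸 * Tᵀ = 1) (hL : ∀ x, ∫ ω, (A ω *ᵥ x ⬝ᵥ x) ^ 2 ∂μ ≤ L ^ 4 * (𝔸 *ᵥ x ⬝ᵥ x) ^ 2)
    (x : n → ℝ) :
    ∫ ω, (A ω * (Tᵀ * T) * A ω) *ᵥ x ⬝ᵥ x ∂μ ≤ Fintype.card n * L ^ 4 * (𝔸 *ᵥ x ⬝ᵥ x) := by
  set g : (n → ℝ) → Ω → ℝ := fun v ω => A ω *ᵥ v ⬝ᵥ v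
  set f : Ω → ℝ := fun ω => ∑ i, g (T i) ω
  have hg : ∀ v, MemLp (g v) 2 μ := fun v => MemLp.mulVec_dotProduct hL2 v v
  have hf : MemLp f 2 μ := memLp_finsetSum _ fun i _ => hg (T i)
  have hrow : ∀ i, 𝔸 *ᵥ T i ⬝ᵥ T i = 1 := fun i => by
    rw [mulVec_row_dotProduct_row, hT, one_apply_eq]
  have hf_sq : ∫ ω, f ω ^ 2 ∂μ ≤ Fintype.card n ^ 2 * L ^ 4 :=
    calc ∫ ω, f ω ^ 2 ∂μ ≤ Fintype.card n * ∑ i, ∫ ω, g (T i) ω ^ 2 ∂μ :=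
          integral_sum_sq_le _ fun i _ => hg (T i)
      _ ≤ Fintype.card n * ∑ _i : n, L ^ 4 := by
          gcongr with i
          simpa [hrow i] using hL (T i)
      _ = Fintype.card n ^ 2 * L ^ 4 := by
          rw [Finset.sum_const, Finset.card_univ, nsmul_eq_mul]; ring
  have hq : 0 ≤ 𝔸 *ᵥ x ⬝ᵥ x := h𝔸.mulVec_dotProduct_self_nonneg x
  calc ∫ ω, (A ω * (Tᵀ * T) * A ω) *ᵥ x ⬝ᵥ x ∂μ ≤ ∫ ω, f ω * g x ω ∂μ := by
        refine integral_mono_of_nonneg (.of_forall fun ω => ?_) (hf.integrable_mul (hg x))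
          (.of_forall fun ω => (hA ω).mul_transpose_mul_self_mul_mulVec_dotProduct_le T x)
        show 0 ≤ (A ω * (Tᵀ * T) * A ω) *ᵥ x ⬝ᵥ x
        rw [(hA ω).1.mul_transpose_mul_self_mul_mulVec_dotProduct]
        positivity
    _ ≤ Fintype.card n * L ^ 4 * (𝔸 *ᵥ x ⬝ᵥ x) := by
        refine (le_abs_self _).trans (abs_le_of_sq_le_sq ?_ (by positivity))
        calc (∫ ω, f ω * g x ω ∂μ) ^ 2 ≤ (∫ ω, f ω ^ 2 ∂μ) * ∫ ω, g x ω ^ 2 ∂μ :=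
              integral_mul_sq_le hf (hg x)
          _ ≤ (Fintype.card n ^ 2 * L ^ 4) * (L ^ 4 * (𝔸 *ᵥ x ⬝ᵥ x) ^ 2) :=
              mul_le_mul hf_sq (hL x) (integral_nonneg fun ω => sq_nonneg _) (by positivity)
          _ = (Fintype.card n * L ^ 4 * (𝔸 *ᵥ x ⬝ᵥ x)) ^ 2 := by ring

end NormEquivalence

theorem opNorm_expectation_le_of_norm_equiv_general
    {Ω : Type*} [MeasureSpace Ω]
    {d : ℕ} (A : Ω → Matrix (Fin d) (Fin d) ℝ) (L : ℝ)
    (hpsd : ∀ ω, (A ω).PosSemidef)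
    (hL2 : ∀ i j, MemLp (fun ω => A ω i j) 2 ℙ)
    (hposdef : (matExp A).PosDef)
    (hint : ∀ i j, Integrable (fun ω => (A ω * (matExp A)⁻¹ * A ω) i j) ℙ)
    (hnormequiv : ∀ x : Fin d → ℝ, (matExp A).mulVec x ⬝ᵥ x = 1 →
      (∫ ω, ((A ω).mulVec x ⬝ᵥ x) ^ 2 ∂ℙ) ^ ((1 : ℝ) / 4) ≤ L) :
    opNormWrt (matExp A) (matExp fun ω => A ω * (matExp A)⁻¹ * A ω) ≤ d * L ^ 4 := by
  obtain ⟨T, hinv, hT⟩ := hposdef.exists_inv_eq_transpose_mul_self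
  have hconj : ∀ ω, (A ω * (matExp A)⁻¹ * A ω).PosSemidef := fun ω => by
    simpa only [(hpsd ω).1.eq] using hposdef.inv.posSemidef.conjTranspose_mul_mul_same (A ω)
  refine opNormWrt_le_of_posSemidef (posSemidef_matExp hconj hint) (by positivity) fun x => ?_
  rw [matExp_mulVec_dotProduct hint, hinv]
  simpa only [Fintype.card_fin] using integral_mul_transpose_mul_self_mul_le hpsd hL2 hposdef.posSemidef hT
    (integral_sq_le_of_norm_equiv hposdef hnormequiv) x

/-- Under the `L₄`-`L₂` norm equivalence `E[⟨Ax,x⟩²]^{1/4} ≤ L` on the unit sphere of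
the norm endowed by `𝔸 = E[A]`, one has `‖E[A𝔸⁻¹A]‖ₒₚ ≤ d L⁴`. -/
theorem opNorm_expectation_le_of_norm_equiv
    {Ω : Type*} [MeasureSpace Ω] [IsProbabilityMeasure (ℙ : Measure Ω)]
    {d : ℕ} (hd : 0 < d) (A : Ω → Matrix (Fin d) (Fin d) ℝ) (L : ℝ) (hL : 0 < L)
    (hmeas : ∀ i j, Measurable fun ω => A ω i j)
    (hpsd : ∀ ω, (A ω).PosSemidef)
    (hL2 : ∀ i j, MemLp (fun ω => A ω i j) 2 ℙ)
    (hposdef : (matExp A).PosDef)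
    (hint : ∀ i j, Integrable (fun ω => (A ω * (matExp A)⁻¹ * A ω) i j) ℙ)
    (hnormequiv : ∀ x : Fin d → ℝ, (matExp A).mulVec x ⬝ᵥ x = 1 →
      (∫ ω, ((A ω).mulVec x ⬝ᵥ x) ^ 2 ∂ℙ) ^ ((1 : ℝ) / 4) ≤ L) :
    opNormWrt (matExp A) (matExp fun ω => A ω * (matExp A)⁻¹ * A ω) ≤ d * L ^ 4 :=
  opNorm_expectation_le_of_norm_equiv_general A L hpsd hL2 hposdef hint hnormequiv
end

section
/- Let $a_1,\dots,a_m \geq 0$, let $l \leq m$ be a positive integer, let $b, \gamma > 0$ with $b = \gamma m / l$, and let $J^* \subseteq \{1,\dots,m\}$ be a set of indices of the $l$ largest values among $a_1,\dots,a_m$. If $\frac{1}{m}\sum_{i \notin J^*} a_i > \gamma/2$, then $\frac{1}{m}\sum_{i=1}^m (a_i \wedge b) > \gamma/2$. -/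
open Finset

/-- Truncation lemma: if after removing the `l` largest values of the nonnegative
numbers `a₁,…,a_m` the average still exceeds `γ/2`, then the average of the values
truncated at level `b = γm/l` also exceeds `γ/2`. -/
theorem truncated_average_lower_bound
    {m : ℕ} (hm : 0 < m) (a : Fin m → ℝ) (ha : ∀ i, 0 ≤ a i)
    (l : ℕ) (hl : 0 < l) (hlm : l ≤ m) (γ b : ℝ) (hγ : 0 < γ)
    (hb : b = γ * m / l)
    (Jstar : Finset (Fin m)) (hJcard : Jstar.card = l)
    (hJtop : ∀ i ∈ Jstar, ∀ j ∉ Jstar, a j ≤ a i)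
    (hsum : γ / 2 < (m : ℝ)⁻¹ * ∑ i ∈ Finset.univ \ Jstar, a i) :
    γ / 2 < (m : ℝ)⁻¹ * ∑ i, min (a i) b := by
  have hm' : (0:ℝ) < m := by exact_mod_cast hm
  have hl' : (0:ℝ) < l := by exact_mod_cast hl
  have hb0 : 0 < b := by
    rw [hb]; positivity
  have hminnn : ∀ i, 0 ≤ min (a i) b := fun i => le_min (ha i) hb0.le
  by_cases hcase : ∀ j ∉ Jstar, a j ≤ b
  · -- all small outside Jstar
    have h1 : ∑ i ∈ Finset.univ \ Jstar, a i ≤ ∑ i, min (a i) b := by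
      calc ∑ i ∈ Finset.univ \ Jstar, a i
          = ∑ i ∈ Finset.univ \ Jstar, min (a i) b := by
            refine Finset.sum_congr rfl fun i hi => ?_
            rw [Finset.mem_sdiff] at hi
            exact (min_eq_left (hcase i hi.2)).symm
        _ ≤ ∑ i, min (a i) b :=
            Finset.sum_le_sum_of_subset_of_nonneg (Finset.sdiff_subset)
              (fun i _ _ => hminnn i)
    calc γ / 2 < (m : ℝ)⁻¹ * ∑ i ∈ Finset.univ \ Jstar, a i := hsum
      _ ≤ (m : ℝ)⁻¹ * ∑ i, min (a i) b := by
          apply mul_le_mul_of_nonneg_left h1 (by positivity)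
  · push_neg at hcase
    obtain ⟨j0, hj0, hj0b⟩ := hcase
    have hJb : ∀ i ∈ Jstar, min (a i) b = b := fun i hi =>
      min_eq_right ((le_of_lt hj0b).trans (hJtop i hi j0 hj0))
    have h1 : (l : ℝ) * b ≤ ∑ i, min (a i) b := by
      calc (l : ℝ) * b = ∑ i ∈ Jstar, min (a i) b := by
            rw [Finset.sum_congr rfl hJb, Finset.sum_const, hJcard, nsmul_eq_mul]
        _ ≤ ∑ i, min (a i) b :=
            Finset.sum_le_sum_of_subset_of_nonneg (Finset.subset_univ _)
              (fun i _ _ => hminnn i)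
    have h2 : (l : ℝ) * b = γ * m := by
      rw [hb]; field_simp
    have : γ * m ≤ ∑ i, min (a i) b := h2 ▸ h1
    calc γ / 2 < γ := by linarith
      _ = (m : ℝ)⁻¹ * (γ * m) := by field_simp
      _ ≤ (m : ℝ)⁻¹ * ∑ i, min (a i) b :=
          mul_le_mul_of_nonneg_left this (by positivity)
end

section
/- Let $\ell: \mathbb{R} \to \mathbb{R}$ be twice continuously differentiable with $\ell'' > 0$ continuous, let $V$ be a real random variable with $v_1 := \mathbb{E}[|V|] < \infty$, let $X$ be a $d$-dimensional random vector satisfying $\mathbb{E}[\langle X,z\rangle^4]^{1/4} \leq L_X \mathbb{E}[\langle X,z\rangle^2]^{1/2}$ for all $z$, and define $\varepsilon := \min\{\ell''(u) : |u| \leq 8 L_X^4 v_1\} > 0$. Then for every $z \in \mathbb{R}^d$: $\mathbb{E}[\ell''(V)\langle X,z\rangle^2] \geq \frac{\varepsilon}{16 L_X^4}\, \mathbb{E}[\langle X,z\rangle^2]$. -/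
/-!
On the event `C = {|V| ≤ 8 L⁴ E|V|}` the weight `ℓ''(V)` is at least `ε`, and it is positive
elsewhere, so `E[ℓ''(V)⟨X,z⟩²] ≥ ε E[⟨X,z⟩²; C]`. Markov's inequality gives
`P(Cᶜ) ≤ 1/(8L⁴)`, and Cauchy–Schwarz together with the `L⁴`–`L²` comparison gives
`E[⟨X,z⟩²; Cᶜ] ≤ (E⟨X,z⟩⁴ P(Cᶜ))^{1/2} ≤ E⟨X,z⟩²/2`. Hence the left side is at least
`ε E⟨X,z⟩²/2`, which dominates `ε/(16L⁴) E⟨X,z⟩²` as `L ≥ 1`.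
-/

open MeasureTheory ProbabilityTheory Matrix
open scoped ENNReal

section

variable {Ω : Type*} [MeasurableSpace Ω] {μ : Measure Ω}

theorem MeasureTheory.MemLp.memLp_two_sq {Y : Ω → ℝ} (hY : MemLp Y 4 μ) :
    MemLp (fun ω => Y ω ^ 2) 2 μ := by
  have h := hY.norm_rpow_div 2
  rw [show (4 : ℝ≥0∞) / 2 = 2 by rw [eq_comm, ENNReal.eq_div_iff] <;> norm_num] at h
  simpa using h

theorem MeasureTheory.MemLp.integrable_pow_four {Y : Ω → ℝ} (hY : MemLp Y 4 μ) :
    Integrable (fun ω => Y ω ^ 4) μ := by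
  simpa only [← pow_mul] using hY.memLp_two_sq.integrable_sq

theorem sq_setIntegral_sq_le [IsFiniteMeasure μ] {Y : Ω → ℝ} (hY : MemLp Y 4 μ) (A : Set Ω) :
    (∫ ω in A, Y ω ^ 2 ∂μ) ^ 2 ≤ (∫ ω, Y ω ^ 4 ∂μ) * μ.real A := by
  have hY2 : MemLp (fun ω => Y ω ^ 2) (ENNReal.ofReal 2) (μ.restrict A) := by
    simpa using hY.memLp_two_sq.restrict A
  have hHolder := integral_mul_le_Lp_mul_Lq_of_nonneg Real.HolderConjugate.two_two
    (Filter.Eventually.of_forall fun ω => sq_nonneg (Y ω))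
    (Filter.Eventually.of_forall fun _ => zero_le_one) hY2 (memLp_const (1 : ℝ))
  simp only [mul_one, one_pow, integral_const, smul_eq_mul, ← Real.sqrt_eq_rpow, Real.rpow_two,
    ← pow_mul, Nat.reduceMul, measureReal_restrict_apply_univ] at hHolder
  have hA4 : 0 ≤ ∫ ω in A, Y ω ^ 4 ∂μ := integral_nonneg fun ω => by positivity
  calc (∫ ω in A, Y ω ^ 2 ∂μ) ^ 2
      ≤ (√(∫ ω in A, Y ω ^ 4 ∂μ) * √(μ.real A)) ^ 2 :=
        pow_le_pow_left₀ (integral_nonneg fun ω => sq_nonneg _) hHolder 2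
    _ = (∫ ω in A, Y ω ^ 4 ∂μ) * μ.real A := by
        rw [mul_pow, Real.sq_sqrt hA4, Real.sq_sqrt measureReal_nonneg]
    _ ≤ (∫ ω, Y ω ^ 4 ∂μ) * μ.real A :=
        mul_le_mul_of_nonneg_right (setIntegral_le_integral hY.integrable_pow_four
          (Filter.Eventually.of_forall fun ω => by positivity)) measureReal_nonneg

theorem measureReal_mul_integral_abs_lt_le_inv [IsFiniteMeasure μ] {V : Ω → ℝ} (hV : Integrable V μ)
    {t : ℝ} (ht : 0 < t) :
    μ.real {ω | t * ∫ ω, |V ω| ∂μ < |V ω|} ≤ t⁻¹ := by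
  have hint : 0 ≤ ∫ ω, |V ω| ∂μ := integral_nonneg fun ω => abs_nonneg _
  rcases hint.eq_or_lt with h0 | hpos
  · have hV0 : (fun ω => |V ω|) =ᵐ[μ] 0 :=
      (integral_eq_zero_iff_of_nonneg (fun ω => abs_nonneg _) hV.abs).1 h0.symm
    have hnull : μ {ω | t * ∫ ω, |V ω| ∂μ < |V ω|} = 0 := by
      rw [measure_eq_zero_iff_ae_notMem]
      filter_upwards [hV0] with ω hω
      simp [← h0, hω]
    simp [measureReal_def, hnull, ht.le]
  · have hmarkov := mul_meas_ge_le_integral_of_nonneg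
      (Filter.Eventually.of_forall fun ω => abs_nonneg (V ω)) hV.abs (t * ∫ ω, |V ω| ∂μ)
    have htm : t * μ.real {ω | t * ∫ ω, |V ω| ∂μ ≤ |V ω|} ≤ 1 :=
      le_of_mul_le_mul_left (by linarith) hpos
    calc μ.real {ω | t * ∫ ω, |V ω| ∂μ < |V ω|}
        ≤ μ.real {ω | t * ∫ ω, |V ω| ∂μ ≤ |V ω|} :=
          measureReal_mono (Set.ofPred_subset_ofPred.2 fun _ => le_of_lt)
      _ ≤ t⁻¹ := by rwa [← one_div, le_div_iff₀' ht]

theorem pow_four_le_of_rpow_le {a b L : ℝ} (ha : 0 ≤ a) (hb : 0 ≤ b)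
    (h : a ^ ((1 : ℝ) / 4) ≤ L * b ^ ((1 : ℝ) / 2)) : a ≤ L ^ 4 * b ^ 2 := by
  have ha4 : (a ^ ((1 : ℝ) / 4)) ^ 4 = a := by
    rw [one_div]; exact_mod_cast Real.rpow_inv_natCast_pow ha four_ne_zero
  have hb4 : (b ^ ((1 : ℝ) / 2)) ^ 4 = b ^ 2 := by
    rw [← Real.sqrt_eq_rpow, show 4 = 2 * 2 from rfl, pow_mul, Real.sq_sqrt hb]
  calc a = (a ^ ((1 : ℝ) / 4)) ^ 4 := ha4.symm
    _ ≤ (L * b ^ ((1 : ℝ) / 2)) ^ 4 := pow_le_pow_left₀ (Real.rpow_nonneg ha _) h 4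
    _ = L ^ 4 * b ^ 2 := by rw [mul_pow, hb4]

theorem IsCompact.sInf_image_pos {α : Type*} [TopologicalSpace α] {K : Set α} (hK : IsCompact K)
    (hne : K.Nonempty) {f : α → ℝ} (hf : ContinuousOn f K) (hpos : ∀ x ∈ K, 0 < f x) :
    0 < sInf (f '' K) := by
  obtain ⟨x, hx, hmin⟩ := hK.exists_sInf_image_eq hne hf
  exact hmin ▸ hpos x hx

theorem integral_sq_le_two_mul_setIntegral_sq [IsFiniteMeasure μ] {Y : Ω → ℝ} (hY : MemLp Y 4 μ)
    {L : ℝ} (hL : 0 < L) (hY4 : ∫ ω, Y ω ^ 4 ∂μ ≤ L ^ 4 * (∫ ω, Y ω ^ 2 ∂μ) ^ 2)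
    {C : Set Ω} (hC : MeasurableSet C) (hCc : μ.real Cᶜ ≤ (4 * L ^ 4)⁻¹) :
    ∫ ω, Y ω ^ 2 ∂μ ≤ 2 * ∫ ω in C, Y ω ^ 2 ∂μ := by
  have hsplit := integral_add_compl hC (hY.memLp_two_sq.integrable one_le_two)
  have hcompl : (∫ ω in Cᶜ, Y ω ^ 2 ∂μ) ^ 2 ≤ ((∫ ω, Y ω ^ 2 ∂μ) / 2) ^ 2 :=
    calc (∫ ω in Cᶜ, Y ω ^ 2 ∂μ) ^ 2 ≤ (∫ ω, Y ω ^ 4 ∂μ) * μ.real Cᶜ :=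
          sq_setIntegral_sq_le hY Cᶜ
      _ ≤ L ^ 4 * (∫ ω, Y ω ^ 2 ∂μ) ^ 2 * (4 * L ^ 4)⁻¹ := by gcongr
      _ = ((∫ ω, Y ω ^ 2 ∂μ) / 2) ^ 2 := by field_simp; ring
  have hnonneg : 0 ≤ (∫ ω, Y ω ^ 2 ∂μ) / 2 := by positivity
  have hcompl' := (pow_le_pow_iff_left₀ (integral_nonneg fun ω => sq_nonneg _) hnonneg
    two_ne_zero).1 hcompl
  linarith

theorem mul_setIntegral_le_integral_mul {f w : Ω → ℝ} (hf : Integrable f μ)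
    (hwf : Integrable (fun ω => w ω * f ω) μ) (hf0 : ∀ ω, 0 ≤ f ω) (hw0 : ∀ ω, 0 ≤ w ω)
    {C : Set Ω} (hC : MeasurableSet C) {ε : ℝ} (hεw : ∀ ω ∈ C, ε ≤ w ω) :
    ε * ∫ ω in C, f ω ∂μ ≤ ∫ ω, w ω * f ω ∂μ :=
  calc ε * ∫ ω in C, f ω ∂μ = ∫ ω in C, ε * f ω ∂μ := (integral_const_mul ε _).symm
    _ ≤ ∫ ω in C, w ω * f ω ∂μ :=
        setIntegral_mono_on (hf.integrableOn.const_mul ε) hwf.integrableOn hC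
          fun ω hω => mul_le_mul_of_nonneg_right (hεw ω hω) (hf0 ω)
    _ ≤ ∫ ω, w ω * f ω ∂μ :=
        setIntegral_le_integral hwf
          (Filter.Eventually.of_forall fun ω => mul_nonneg (hw0 ω) (hf0 ω))

end

theorem portfolio_norm_lower_bound_general
    {Ω : Type*} [MeasureSpace Ω] [IsProbabilityMeasure (ℙ : Measure Ω)]
    {d : ℕ} (ddℓ : ℝ → ℝ)
    (hcont : Continuous ddℓ) (hpos : ∀ t, 0 < ddℓ t)
    (V : Ω → ℝ) (hVmeas : Measurable V) (hVint : Integrable V ℙ)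
    (X : Ω → Fin d → ℝ)
    (LX : ℝ) (hLX : 1 ≤ LX)
    (hL4 : ∀ z : Fin d → ℝ, MemLp (fun ω => X ω ⬝ᵥ z) 4 ℙ)
    (hne : ∀ z : Fin d → ℝ,
      (∫ ω, (X ω ⬝ᵥ z) ^ 4 ∂ℙ) ^ ((1 : ℝ) / 4)
        ≤ LX * (∫ ω, (X ω ⬝ᵥ z) ^ 2 ∂ℙ) ^ ((1 : ℝ) / 2))
    (v₁ : ℝ) (hv₁ : v₁ = ∫ ω, |V ω| ∂ℙ)
    (hint : ∀ z : Fin d → ℝ, Integrable (fun ω => ddℓ (V ω) * (X ω ⬝ᵥ z) ^ 2) ℙ)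
    (ε : ℝ)
    (hε : ε = sInf (ddℓ '' Set.Icc (-(8 * LX ^ 4 * v₁)) (8 * LX ^ 4 * v₁))) :
    0 < ε ∧
    ∀ z : Fin d → ℝ,
      ε / (16 * LX ^ 4) * ∫ ω, (X ω ⬝ᵥ z) ^ 2 ∂ℙ
        ≤ ∫ ω, ddℓ (V ω) * (X ω ⬝ᵥ z) ^ 2 ∂ℙ := by
  have hLX0 : 0 < LX := by linarith
  have hc : 0 ≤ 8 * LX ^ 4 * v₁ := by
    have : 0 ≤ v₁ := hv₁ ▸ integral_nonneg fun ω => abs_nonneg (V ω)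
    positivity
  have hε_pos : 0 < ε := hε ▸ isCompact_Icc.sInf_image_pos ⟨0, by simpa using hc⟩
    hcont.continuousOn fun t _ => hpos t
  refine ⟨hε_pos, fun z => ?_⟩
  set C := {ω | |V ω| ≤ 8 * LX ^ 4 * v₁}
  have hC : MeasurableSet C := measurableSet_le hVmeas.abs measurable_const
  have hCc : (ℙ : Measure Ω).real Cᶜ ≤ (4 * LX ^ 4)⁻¹ :=
    calc (ℙ : Measure Ω).real Cᶜ ≤ (8 * LX ^ 4)⁻¹ := by
          simpa only [C, Set.compl_ofPred, not_le, hv₁]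
            using measureReal_mul_integral_abs_lt_le_inv hVint (by positivity : 0 < 8 * LX ^ 4)
      _ ≤ (4 * LX ^ 4)⁻¹ := by gcongr; linarith
  have hhalf := integral_sq_le_two_mul_setIntegral_sq (hL4 z) hLX0
    (pow_four_le_of_rpow_le (integral_nonneg fun ω => by positivity)
      (integral_nonneg fun ω => sq_nonneg _) (hne z)) hC hCc
  calc ε / (16 * LX ^ 4) * ∫ ω, (X ω ⬝ᵥ z) ^ 2 ∂ℙ ≤ ε / 2 * ∫ ω, (X ω ⬝ᵥ z) ^ 2 ∂ℙ := by
        gcongr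
        nlinarith [one_le_pow₀ (n := 4) hLX]
    _ ≤ ε * ∫ ω in C, (X ω ⬝ᵥ z) ^ 2 ∂ℙ := by nlinarith
    _ ≤ ∫ ω, ddℓ (V ω) * (X ω ⬝ᵥ z) ^ 2 ∂ℙ :=
        mul_setIntegral_le_integral_mul ((hL4 z).memLp_two_sq.integrable one_le_two) (hint z)
          (fun ω => sq_nonneg _) (fun ω => (hpos _).le) hC fun ω hω =>
            hε ▸ csInf_le (isCompact_Icc.bddBelow_image hcont.continuousOn)
              (Set.mem_image_of_mem _ (abs_le.1 hω))

/-- Lower bound in the norm-equivalence lemma for portfolio optimization: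
`E[ℓ''(V)⟨X,z⟩²] ≥ (ε/(16 L_X⁴)) E[⟨X,z⟩²]`, where
`ε = min {ℓ''(u) : |u| ≤ 8 L_X⁴ E|V|} > 0`. -/
theorem portfolio_norm_lower_bound
    {Ω : Type*} [MeasureSpace Ω] [IsProbabilityMeasure (ℙ : Measure Ω)]
    {d : ℕ} (ℓ dℓ ddℓ : ℝ → ℝ)
    (hderiv1 : ∀ t, HasDerivAt ℓ (dℓ t) t)
    (hderiv2 : ∀ t, HasDerivAt dℓ (ddℓ t) t)
    (hcont : Continuous ddℓ) (hpos : ∀ t, 0 < ddℓ t)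
    (V : Ω → ℝ) (hVmeas : Measurable V) (hVint : Integrable V ℙ)
    (X : Ω → Fin d → ℝ) (hXmeas : Measurable X)
    (LX : ℝ) (hLX : 1 ≤ LX)
    (hL4 : ∀ z : Fin d → ℝ, MemLp (fun ω => X ω ⬝ᵥ z) 4 ℙ)
    (hne : ∀ z : Fin d → ℝ,
      (∫ ω, (X ω ⬝ᵥ z) ^ 4 ∂ℙ) ^ ((1 : ℝ) / 4)
        ≤ LX * (∫ ω, (X ω ⬝ᵥ z) ^ 2 ∂ℙ) ^ ((1 : ℝ) / 2))
    (v₁ : ℝ) (hv₁ : v₁ = ∫ ω, |V ω| ∂ℙ)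
    (hint : ∀ z : Fin d → ℝ, Integrable (fun ω => ddℓ (V ω) * (X ω ⬝ᵥ z) ^ 2) ℙ)
    (ε : ℝ)
    (hε : ε = sInf (ddℓ '' Set.Icc (-(8 * LX ^ 4 * v₁)) (8 * LX ^ 4 * v₁))) :
    0 < ε ∧
    ∀ z : Fin d → ℝ,
      ε / (16 * LX ^ 4) * ∫ ω, (X ω ⬝ᵥ z) ^ 2 ∂ℙ
        ≤ ∫ ω, ddℓ (V ω) * (X ω ⬝ᵥ z) ^ 2 ∂ℙ :=
  portfolio_norm_lower_bound_general ddℓ hcont hpos V hVmeas hVint X LX hLX hL4 hne v₁ hv₁ hint ε hε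
end

section
/- Let $H \subseteq L_2$ be a set of real-valued random variables, $\kappa, \delta \in (0,1]$, and suppose $H$ satisfies the small ball property: $\mathbb{P}[h^2 \geq \kappa^2 \mathbb{E}[h^2]] \geq \delta$ for all $h \in H$. Then there exist absolute constants $s_1, s_2 > 0$ such that for every $m \geq 1$, every $h \in H$, and independent copies $h_1,\dots,h_m$ of $h$: with probability at least $1 - 2\exp(-s_2 \delta m)$, for all $J \subseteq \{1,\dots,m\}$ with $|J| \leq s_1 \delta m$, one has $\frac{1}{m}\sum_{i \in \{1,\dots,m\}\setminus J} h_i^2 \geq \frac{\delta \kappa^2}{2}\, \mathbb{E}[h^2]$. -/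
/-!
Call index `i` good if `h_i² ≥ κ² E[h²]`; by the small ball property the goodness events are
independent with probability at least `δ`. Chernoff's bound at `t = -log 2` shows that with
probability at least `1 - exp(-δm/10)` more than `(1/2 + 1/100) δ m` indices are good. Removing
at most `δm/100` of them leaves at least `δm/2` good indices, each contributing `κ² E[h²]`.
-/

open MeasureTheory ProbabilityTheory Real Finset

lemma exp_mul_indicator_one {α : Type*} (B : Set α) (t : ℝ) (x : α) :
    exp (t * B.indicator 1 x) = 1 + (exp t - 1) * B.indicator 1 x := by
  by_cases hx : x ∈ B <;> simp [hx]

namespace ProbabilityTheory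

variable {Ω : Type*} [MeasurableSpace Ω] {ν : Measure Ω}

lemma iIndepFun.iIndepSet_preimage {ι β : Type*} [MeasurableSpace β] {f : ι → Ω → β}
    (hf : iIndepFun f ν) (hfm : ∀ i, Measurable (f i)) {A : ι → Set β}
    (hA : ∀ i, MeasurableSet (A i)) :
    iIndepSet (fun i ↦ f i ⁻¹' A i) ν :=
  hf.iIndep.iIndepSets'.iIndepSet_of_mem (fun i ↦ (hA i).preimage (comap_measurable (f i)))
    fun i ↦ hfm i (hA i)

lemma integrable_exp_mul_indicator_one [IsFiniteMeasure ν] {B : Set Ω} (hB : MeasurableSet B)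
    (t : ℝ) : Integrable (fun ω ↦ exp (t * B.indicator 1 ω)) ν := by
  simp_rw [exp_mul_indicator_one]
  exact (integrable_const 1).add (((integrable_const 1).indicator hB).const_mul _)

lemma mgf_indicator_one [IsProbabilityMeasure ν] {B : Set Ω} (hB : MeasurableSet B) (t : ℝ) :
    mgf (B.indicator 1) ν t = 1 + (exp t - 1) * ν.real B := by
  have hint : Integrable (B.indicator (1 : Ω → ℝ)) ν := (integrable_const 1).indicator hB
  simp_rw [mgf, exp_mul_indicator_one]
  rw [integral_add (integrable_const 1) (hint.const_mul _), integral_const_mul,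
    integral_indicator_one hB]
  simp

lemma measure_sum_indicator_le_le_exp {ι : Type*} [Fintype ι] {B : ι → Set Ω}
    (hB : ∀ i, MeasurableSet (B i)) (hind : iIndepSet B ν) {p : ℝ}
    (hp : ∀ i, p ≤ ν.real (B i)) (a : ℝ) :
    ν.real {ω | ∑ i, (B i).indicator 1 ω ≤ a} ≤ exp (log 2 * a - p / 2 * Fintype.card ι) := by
  have := hind.isProbabilityMeasure
  set X : ι → Ω → ℝ := fun i ↦ (B i).indicator 1
  have hXm : ∀ i, Measurable (X i) := fun i ↦ measurable_one.indicator (hB i)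
  have hXind : iIndepFun X ν := hind.iIndepFun_indicator
  have hmgf : ∀ i, mgf (X i) ν (-log 2) ≤ exp (-(p / 2)) := fun i ↦ by
    rw [mgf_indicator_one (hB i), exp_neg, exp_log two_pos]
    linarith [add_one_le_exp (-(p / 2)), hp i]
  have hint : ∀ i ∈ univ, Integrable (fun ω ↦ exp (-log 2 * X i ω)) ν := fun i _ ↦
    integrable_exp_mul_indicator_one (hB i) _
  calc ν.real {ω | ∑ i, (B i).indicator 1 ω ≤ a}
      = ν.real {ω | (∑ i, X i) ω ≤ a} := by simp only [X, Finset.sum_apply]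
    _ ≤ exp (-(-log 2) * a) * mgf (∑ i, X i) ν (-log 2) :=
        measure_le_le_exp_mul_mgf a (by simp [log_nonneg one_le_two])
          (hXind.integrable_exp_mul_sum hXm hint)
    _ = exp (log 2 * a) * ∏ i, mgf (X i) ν (-log 2) := by rw [hXind.mgf_sum hXm, neg_neg]
    _ ≤ exp (log 2 * a) * ∏ _i : ι, exp (-(p / 2)) := by
        gcongr with i
        · exact fun i _ ↦ mgf_nonneg
        · exact hmgf i
    _ = exp (log 2 * a - p / 2 * Fintype.card ι) := by
        rw [prod_const, ← exp_nat_mul, ← exp_add, card_univ]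
        ring_nf

end ProbabilityTheory

lemma mul_indicator_one_le {α : Type*} {g : α → ℝ} (hg : 0 ≤ g) (c : ℝ) (x : α) :
    c * {x | c ≤ g x}.indicator 1 x ≤ g x := by
  by_cases hx : c ≤ g x
  · simp [hx]
  · simpa [hx] using hg x

lemma mul_sum_sub_card_le_sum_sdiff {ι : Type*} [Fintype ι] [DecidableEq ι] {x f : ι → ℝ}
    {c : ℝ} (hc : 0 ≤ c) (hx : ∀ i, x i ≤ 1) (hxf : ∀ i, c * x i ≤ f i) (J : Finset ι) :
    c * (∑ i, x i - #J) ≤ ∑ i ∈ univ \ J, f i := by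
  have hJ : ∑ i ∈ J, x i ≤ #J := by simpa using sum_le_sum fun i (_ : i ∈ J) ↦ hx i
  calc c * (∑ i, x i - #J) ≤ c * ∑ i ∈ univ \ J, x i := by
        rw [← sum_sdiff (subset_univ J)]
        gcongr
        linarith
    _ ≤ ∑ i ∈ univ \ J, f i := by
        rw [mul_sum]
        exact sum_le_sum fun i _ ↦ hxf i

lemma mul_div_two_le_inv_mul_sum_sdiff_sq {m : ℕ} {y : Fin m → ℝ} {c δ s : ℝ} (hc : 0 ≤ c)
    (hN : δ * m / 2 + s * δ * m < ∑ i, {i | c ≤ y i ^ 2}.indicator 1 i) (J : Finset (Fin m))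
    (hJ : (#J : ℝ) ≤ s * δ * m) :
    δ * c / 2 ≤ (m : ℝ)⁻¹ * ∑ i ∈ univ \ J, y i ^ 2 := by
  rcases Nat.eq_zero_or_pos m with rfl | hm
  · simp at hN
  have hsum := mul_sum_sub_card_le_sum_sdiff (x := fun i ↦ {i | c ≤ y i ^ 2}.indicator 1 i) hc
    (fun i ↦ Set.indicator_le_self' (fun _ _ ↦ zero_le_one) i)
    (mul_indicator_one_le (fun i ↦ sq_nonneg (y i)) c) J
  calc δ * c / 2 = (m : ℝ)⁻¹ * (c * (δ * m / 2)) := by field_simp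
    _ ≤ (m : ℝ)⁻¹ * (c * (∑ i, {i | c ≤ y i ^ 2}.indicator 1 i - #J)) := by
        gcongr
        linarith
    _ ≤ (m : ℝ)⁻¹ * ∑ i ∈ univ \ J, y i ^ 2 := by gcongr

/-- The small ball property implies a stable lower bound: there are absolute
constants `s₁, s₂ > 0` such that for any class `H ⊆ L₂` satisfying
`ℙ[h² ≥ κ² E[h²]] ≥ δ` for all `h ∈ H`, for every `m`, `h ∈ H` and i.i.d. copies
`h₁,…,h_m` of `h`, with probability at least `1 - 2 exp(-s₂ δ m)`, for every
`J ⊆ {1,…,m}` with `|J| ≤ s₁ δ m` one has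
`(1/m) ∑_{i ∉ J} h_i² ≥ (δκ²/2) E[h²]`. -/
theorem small_ball_implies_stable_lower_bound :
    ∃ s₁ s₂ : ℝ, 0 < s₁ ∧ 0 < s₂ ∧
      ∀ {Ω : Type} [MeasurableSpace Ω] (μ : Measure Ω) [IsProbabilityMeasure μ]
        (H : Set (Ω → ℝ)) (κ δ : ℝ), κ ∈ Set.Ioc (0 : ℝ) 1 → δ ∈ Set.Ioc (0 : ℝ) 1 →
        (∀ h ∈ H, Measurable h) → (∀ h ∈ H, MemLp h 2 μ) →
        (∀ h ∈ H, δ ≤ (μ {ω | κ ^ 2 * (∫ ω', h ω' ^ 2 ∂μ) ≤ h ω ^ 2}).toReal) →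
        ∀ (m : ℕ), 0 < m → ∀ h ∈ H,
        ∀ {Ω' : Type} [MeasurableSpace Ω'] (ν : Measure Ω') [IsProbabilityMeasure ν]
          (h' : Fin m → Ω' → ℝ),
        (∀ i, Measurable (h' i)) →
        iIndepFun h' ν →
        (∀ i, ν.map (h' i) = μ.map h) →
        1 - 2 * Real.exp (-s₂ * δ * m) ≤
          (ν {ω | ∀ J : Finset (Fin m), (J.card : ℝ) ≤ s₁ * δ * m →
            δ * κ ^ 2 / 2 * (∫ ω', h ω' ^ 2 ∂μ)
              ≤ (m : ℝ)⁻¹ * ∑ i ∈ Finset.univ \ J, h' i ω ^ 2}).toReal := by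
  refine ⟨1 / 100, 1 / 10, by norm_num, by norm_num, ?_⟩
  intro Ω _ μ _ H κ δ _ hδ hHm _ hsb m _ h hH Ω' _ ν _ h' hh'm hindep hmap
  set E := ∫ ω, h ω ^ 2 ∂μ
  have hE : 0 ≤ E := integral_nonneg fun ω ↦ sq_nonneg _
  have hA : MeasurableSet {y : ℝ | κ ^ 2 * E ≤ y ^ 2} :=
    measurableSet_le measurable_const (measurable_id.pow_const 2)
  set B : Fin m → Set Ω' := fun i ↦ {ω | κ ^ 2 * E ≤ h' i ω ^ 2}
  have hB : ∀ i, MeasurableSet (B i) := fun i ↦ hh'm i hA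
  have hpB : ∀ i, δ ≤ ν.real (B i) := fun i ↦ by
    have hi : IdentDistrib (h' i) h ν μ :=
      ⟨(hh'm i).aemeasurable, (hHm h hH).aemeasurable, hmap i⟩
    exact (hsb h hH).trans_eq (congrArg ENNReal.toReal (hi.measure_mem_eq hA).symm)
  set bad := {ω | ∑ i, (B i).indicator 1 ω ≤ δ * m / 2 + 1 / 100 * δ * m}
  have hgood : badᶜ ⊆ {ω | ∀ J : Finset (Fin m), (J.card : ℝ) ≤ 1 / 100 * δ * m →
      δ * κ ^ 2 / 2 * E ≤ (m : ℝ)⁻¹ * ∑ i ∈ Finset.univ \ J, h' i ω ^ 2} := fun ω hω J hJ ↦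
    (by ring : δ * κ ^ 2 / 2 * E = δ * (κ ^ 2 * E) / 2).trans_le
      (mul_div_two_le_inv_mul_sum_sdiff_sq (y := fun i ↦ h' i ω) (by positivity) (not_le.mp hω) J hJ)
  have htail : ν.real bad ≤ exp (-(1 / 10) * δ * m) := by
    refine (measure_sum_indicator_le_le_exp hB
      (hindep.iIndepSet_preimage hh'm fun _ ↦ hA) hpB _).trans ?_
    have hδm : 0 ≤ δ * m := by have := hδ.1; positivity
    rw [Fintype.card_fin, exp_le_exp]
    nlinarith [log_two_lt_d9]
  have hbad : MeasurableSet bad :=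
    measurableSet_le (Finset.measurable_sum _ fun i _ ↦ measurable_one.indicator (hB i))
      measurable_const
  calc 1 - 2 * exp (-(1 / 10) * δ * m) ≤ 1 - ν.real bad := by
        linarith [exp_pos (-(1 / 10) * δ * m)]
    _ = ν.real badᶜ := (probReal_compl_eq_one_sub hbad).symm
    _ ≤ _ := measureReal_mono hgood
end

section
/- Let $\ell: \mathbb{R} \to \mathbb{R}$ be twice differentiable with $\ell'' > 0$, let $V$ be a real random variable, and let $X$ be a $d$-dimensional random vector such that all relevant quantities below are finite. Suppose there is $L > 0$ such that $\mathbb{E}[(\ell''(V)\langle X,z\rangle^2)^2]^{1/2} \leq \sqrt{L}\, \mathbb{E}[\ell''(V)\langle X,z\rangle^2]$ for all $z \in \mathbb{R}^d$, and let $\bar{\sigma}^2 := \mathbb{E}[(\ell'(V)^2/\ell''(V))^2]^{1/2}$. Then for every $z \in \mathbb{R}^d$: $\mathbb{E}[\ell'(V)^2\langle X,z\rangle^2] \leq \bar{\sigma}^2 \sqrt{L}\, \mathbb{E}[\ell''(V)\langle X,z\rangle^2]$. In particular, $\mathrm{Cov}[\ell'(V)X] \preceq \bar{\sigma}^2\sqrt{L}\;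 \mathbb{E}[\ell''(V)\, X \otimes X]$ in the positive semidefinite order. -/
open MeasureTheory ProbabilityTheory Matrix

/-!
Writing `ℓ'(V)²⟨X,z⟩² = (ℓ'(V)²/ℓ''(V)) · ℓ''(V)⟨X,z⟩²`, Cauchy–Schwarz bounds
`E[ℓ'(V)²⟨X,z⟩²]` by `σ̄²` times the `L²` norm of `ℓ''(V)⟨X,z⟩²`, and the `L⁴`–`L²` comparison
bounds that norm by `√L E[ℓ''(V)⟨X,z⟩²]`. For the matrix inequality, the quadratic form of the
covariance matrix at `z` is the variance of `ℓ'(V)⟨X,z⟩`, which is at most its second moment.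
-/

section

variable {Ω ι : Type*} {mΩ : MeasurableSpace Ω} {μ : Measure Ω}

theorem memLp_two_of_nonneg_of_integrable_sq {f : Ω → ℝ} (hf : 0 ≤ f)
    (hf2 : Integrable (fun ω => f ω ^ 2) μ) : MemLp f 2 μ := by
  -- `f = √(f²)` recovers the measurability of `f` from that of `f²`
  have hmeas : AEStronglyMeasurable f μ := by
    have := Real.continuous_sqrt.comp_aestronglyMeasurable hf2.aestronglyMeasurable
    simpa only [Function.comp_def, Real.sqrt_sq (hf _)] using this
  exact (memLp_two_iff_integrable_sq hmeas).2 hf2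

theorem integral_mul_le_sqrt_integral_sq_mul_of_nonneg {f g : Ω → ℝ}
    (hf : 0 ≤ f) (hg : 0 ≤ g)
    (hf2 : Integrable (fun ω => f ω ^ 2) μ) (hg2 : Integrable (fun ω => g ω ^ 2) μ) :
    ∫ ω, f ω * g ω ∂μ
      ≤ (∫ ω, f ω ^ 2 ∂μ) ^ ((1 : ℝ) / 2) * (∫ ω, g ω ^ 2 ∂μ) ^ ((1 : ℝ) / 2) := by
  have hofReal : ENNReal.ofReal 2 = 2 := by norm_num
  simpa only [Real.rpow_two] using integral_mul_le_Lp_mul_Lq_of_nonneg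
    Real.HolderConjugate.two_two (.of_forall hf) (.of_forall hg)
    (hofReal ▸ memLp_two_of_nonneg_of_integrable_sq hf hf2)
    (hofReal ▸ memLp_two_of_nonneg_of_integrable_sq hg hg2)

theorem integral_mul_le_sqrt_integral_div_sq_mul {a w q : Ω → ℝ} (ha : 0 ≤ a)
    (hw : ∀ ω, 0 < w ω) (hq : 0 ≤ q) (haw : Integrable (fun ω => (a ω / w ω) ^ 2) μ)
    (hwq : Integrable (fun ω => (w ω * q ω) ^ 2) μ) :
    ∫ ω, a ω * q ω ∂μ
      ≤ (∫ ω, (a ω / w ω) ^ 2 ∂μ) ^ ((1 : ℝ) / 2)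
        * (∫ ω, (w ω * q ω) ^ 2 ∂μ) ^ ((1 : ℝ) / 2) := by
  have hsplit : ∀ ω, a ω * q ω = a ω / w ω * (w ω * q ω) := fun ω => by
    field_simp [(hw ω).ne']
  simp only [hsplit]
  exact integral_mul_le_sqrt_integral_sq_mul_of_nonneg
    (fun ω => div_nonneg (ha ω) (hw ω).le) (fun ω => mul_nonneg (hw ω).le (hq ω)) haw hwq

variable [Fintype ι]

theorem Matrix.posSemidef_sub_of_dotProduct_mulVec_le {A B : Matrix ι ι ℝ} (hA : A.IsSymm)
    (hB : B.IsSymm) (hle : ∀ z, z ⬝ᵥ B *ᵥ z ≤ z ⬝ᵥ A *ᵥ z) : (A - B).PosSemidef := by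
  refine posSemidef_iff_dotProduct_mulVec.2 ⟨?_, fun z => ?_⟩
  · simpa [IsHermitian] using (hA.sub hB).eq
  · simpa [sub_mulVec] using hle z

theorem integrable_mul_mul_of_integrable_mul_dotProduct_sq [DecidableEq ι] {f : Ω → ℝ}
    {X : Ω → ι → ℝ} (h : ∀ z, Integrable (fun ω => f ω * (X ω ⬝ᵥ z) ^ 2) μ) (i j : ι) :
    Integrable (fun ω => f ω * (X ω i * X ω j)) μ := by
  have polarize : ∀ ω, f ω * (X ω i * X ω j) =
      (f ω * (X ω ⬝ᵥ (Pi.single i 1 + Pi.single j 1)) ^ 2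
        - f ω * (X ω ⬝ᵥ Pi.single i 1) ^ 2 - f ω * (X ω ⬝ᵥ Pi.single j 1) ^ 2) / 2 := by
    intro ω
    simp only [dotProduct_add, dotProduct_single, mul_one]
    ring
  simp only [polarize]
  exact (((h _).sub (h _)).sub (h _)).div_const 2

theorem dotProduct_mulVec_integral_mul_mul {w : Ω → ℝ} {X : Ω → ι → ℝ}
    (h : ∀ i j, Integrable (fun ω => w ω * (X ω i * X ω j)) μ) (z : ι → ℝ) :
    z ⬝ᵥ (of fun i j => ∫ ω, w ω * (X ω i * X ω j) ∂μ) *ᵥ z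
      = ∫ ω, w ω * (X ω ⬝ᵥ z) ^ 2 ∂μ := by
  have hexpand : ∀ ω,
      w ω * (X ω ⬝ᵥ z) ^ 2 = ∑ i, ∑ j, z i * (w ω * (X ω i * X ω j)) * z j := by
    intro ω
    rw [dotProduct, sq, Finset.sum_mul_sum, Finset.mul_sum]
    refine Finset.sum_congr rfl fun i _ => ?_
    rw [Finset.mul_sum]
    exact Finset.sum_congr rfl fun j _ => by ring
  simp only [hexpand]
  rw [integral_finsetSum _ fun i _ => integrable_finsetSum _ fun j _ =>
    ((h i j).const_mul _).mul_const _]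
  simp only [dotProduct, mulVec, of_apply, Finset.mul_sum]
  refine Finset.sum_congr rfl fun i _ => ?_
  rw [integral_finsetSum _ fun j _ => ((h i j).const_mul _).mul_const _]
  refine Finset.sum_congr rfl fun j _ => ?_
  rw [integral_mul_const, integral_const_mul]
  ring

theorem dotProduct_mulVec_covariance_le [IsProbabilityMeasure μ] {Y : Ω → ι → ℝ}
    (hY : ∀ i, MemLp (fun ω => Y ω i) 2 μ) (z : ι → ℝ) :
    z ⬝ᵥ (of fun i j => cov[fun ω => Y ω i, fun ω => Y ω j; μ]) *ᵥ z
      ≤ ∫ ω, (Y ω ⬝ᵥ z) ^ 2 ∂μ := by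
  have hYz : ∀ i, MemLp (fun ω => Y ω i * z i) 2 μ := fun i => (hY i).mul_const (z i)
  have hquad : z ⬝ᵥ (of fun i j => cov[fun ω => Y ω i, fun ω => Y ω j; μ]) *ᵥ z
      = cov[fun ω => Y ω ⬝ᵥ z, fun ω => Y ω ⬝ᵥ z; μ] := by
    simp only [dotProduct]
    rw [covariance_fun_sum_fun_sum hYz hYz]
    simp only [mulVec, dotProduct, of_apply, Finset.mul_sum, covariance_mul_const_left,
      covariance_mul_const_right]
    exact Finset.sum_congr rfl fun i _ => Finset.sum_congr rfl fun j _ => by ring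
  have hmeas : AEMeasurable (fun ω => Y ω ⬝ᵥ z) μ := by
    simp only [dotProduct]
    exact (memLp_finsetSum _ fun i _ => hYz i).aestronglyMeasurable.aemeasurable
  rw [hquad, covariance_self hmeas]
  exact variance_le_expectation_sq hmeas.aestronglyMeasurable

end

theorem portfolio_covariance_hessian_comparison_general
    {Ω : Type*} [MeasureSpace Ω] [IsProbabilityMeasure (ℙ : Measure Ω)]
    {d : ℕ} (dℓ ddℓ : ℝ → ℝ)
    (hpos : ∀ t, 0 < ddℓ t)
    (V : Ω → ℝ)
    (X : Ω → Fin d → ℝ)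
    (L : ℝ)
    (hint1 : ∀ z : Fin d → ℝ, Integrable (fun ω => ddℓ (V ω) * (X ω ⬝ᵥ z) ^ 2) ℙ)
    (hint2 : ∀ z : Fin d → ℝ, Integrable (fun ω => (ddℓ (V ω) * (X ω ⬝ᵥ z) ^ 2) ^ 2) ℙ)
    (hint3 : ∀ z : Fin d → ℝ, Integrable (fun ω => dℓ (V ω) ^ 2 * (X ω ⬝ᵥ z) ^ 2) ℙ)
    (hint4 : ∀ z : Fin d → ℝ, Integrable (fun ω => dℓ (V ω) * (X ω ⬝ᵥ z)) ℙ)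
    (hσint : Integrable (fun ω => (dℓ (V ω) ^ 2 / ddℓ (V ω)) ^ 2) ℙ)
    (hLnorm : ∀ z : Fin d → ℝ,
      (∫ ω, (ddℓ (V ω) * (X ω ⬝ᵥ z) ^ 2) ^ 2 ∂ℙ) ^ ((1 : ℝ) / 2)
        ≤ Real.sqrt L * ∫ ω, ddℓ (V ω) * (X ω ⬝ᵥ z) ^ 2 ∂ℙ)
    (σbar2 : ℝ)
    (hσ : σbar2 = (∫ ω, (dℓ (V ω) ^ 2 / ddℓ (V ω)) ^ 2 ∂ℙ) ^ ((1 : ℝ) / 2)) :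
    (∀ z : Fin d → ℝ,
      ∫ ω, dℓ (V ω) ^ 2 * (X ω ⬝ᵥ z) ^ 2 ∂ℙ
        ≤ σbar2 * Real.sqrt L * ∫ ω, ddℓ (V ω) * (X ω ⬝ᵥ z) ^ 2 ∂ℙ) ∧
    (Matrix.PosSemidef
      ((σbar2 * Real.sqrt L) •
          (Matrix.of fun i j => ∫ ω, ddℓ (V ω) * (X ω i * X ω j) ∂ℙ)
        - Matrix.of fun i j =>
            ∫ ω, (dℓ (V ω) * X ω i - ∫ ω', dℓ (V ω') * X ω' i ∂ℙ)
                * (dℓ (V ω) * X ω j - ∫ ω', dℓ (V ω') * X ω' j ∂ℙ) ∂ℙ)) := by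
  have hmoment : ∀ z : Fin d → ℝ, ∫ ω, dℓ (V ω) ^ 2 * (X ω ⬝ᵥ z) ^ 2 ∂ℙ
      ≤ σbar2 * Real.sqrt L * ∫ ω, ddℓ (V ω) * (X ω ⬝ᵥ z) ^ 2 ∂ℙ := fun z => by
    have hcauchy_schwarz := hσ ▸ integral_mul_le_sqrt_integral_div_sq_mul
      (fun _ => sq_nonneg _) (fun ω => hpos (V ω)) (fun _ => sq_nonneg _) hσint (hint2 z)
    rw [mul_assoc]
    exact hcauchy_schwarz.trans (mul_le_mul_of_nonneg_left (hLnorm z) (hσ ▸ by positivity))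
  refine ⟨hmoment, ?_⟩
  have hgrad : ∀ i, MemLp (fun ω => dℓ (V ω) * X ω i) 2 ℙ := fun i => by
    have hint := hint4 (Pi.single i 1)
    have hint_sq := hint3 (Pi.single i 1)
    simp only [dotProduct_single, mul_one] at hint hint_sq
    exact (memLp_two_iff_integrable_sq hint.aestronglyMeasurable).2
      (by simpa only [mul_pow] using hint_sq)
  have hhess := integrable_mul_mul_of_integrable_mul_dotProduct_sq hint1
  refine posSemidef_sub_of_dotProduct_mulVec_le ?_ ?_ fun z => ?_
  · exact IsSymm.smul (IsSymm.ext fun i j => by simp only [of_apply, mul_comm]) _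
  · exact IsSymm.ext fun i j => covariance_comm _ _
  · calc _ ≤ ∫ ω, ((dℓ (V ω) • X ω) ⬝ᵥ z) ^ 2 ∂ℙ := dotProduct_mulVec_covariance_le hgrad z
      _ = ∫ ω, dℓ (V ω) ^ 2 * (X ω ⬝ᵥ z) ^ 2 ∂ℙ := by
          simp only [smul_dotProduct, smul_eq_mul, mul_pow]
      _ ≤ _ := hmoment z
      _ = _ := by
          rw [smul_mulVec, dotProduct_smul, dotProduct_mulVec_integral_mul_mul hhess, smul_eq_mul]

/-- Comparison between the covariance of the gradient and the Hessian in the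
portfolio optimization problem: if
`E[(ℓ''(V)⟨X,z⟩²)²]^{1/2} ≤ √L E[ℓ''(V)⟨X,z⟩²]` for all `z` and
`σ̄² = E[(ℓ'(V)²/ℓ''(V))²]^{1/2}`, then
`E[ℓ'(V)²⟨X,z⟩²] ≤ σ̄² √L E[ℓ''(V)⟨X,z⟩²]` for all `z`; in particular
`Cov[ℓ'(V)X] ⪯ σ̄² √L E[ℓ''(V) X ⊗ X]` in the positive semidefinite order. -/
theorem portfolio_covariance_hessian_comparison
    {Ω : Type*} [MeasureSpace Ω] [IsProbabilityMeasure (ℙ : Measure Ω)]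
    {d : ℕ} (ℓ dℓ ddℓ : ℝ → ℝ)
    (hderiv1 : ∀ t, HasDerivAt ℓ (dℓ t) t)
    (hderiv2 : ∀ t, HasDerivAt dℓ (ddℓ t) t)
    (hpos : ∀ t, 0 < ddℓ t)
    (V : Ω → ℝ) (hVmeas : Measurable V)
    (X : Ω → Fin d → ℝ) (hXmeas : Measurable X)
    (L : ℝ) (hL : 0 < L)
    (hint1 : ∀ z : Fin d → ℝ, Integrable (fun ω => ddℓ (V ω) * (X ω ⬝ᵥ z) ^ 2) ℙ)
    (hint2 : ∀ z : Fin d → ℝ, Integrable (fun ω => (ddℓ (V ω) * (X ω ⬝ᵥ z) ^ 2) ^ 2) ℙ)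
    (hint3 : ∀ z : Fin d → ℝ, Integrable (fun ω => dℓ (V ω) ^ 2 * (X ω ⬝ᵥ z) ^ 2) ℙ)
    (hint4 : ∀ z : Fin d → ℝ, Integrable (fun ω => dℓ (V ω) * (X ω ⬝ᵥ z)) ℙ)
    (hσint : Integrable (fun ω => (dℓ (V ω) ^ 2 / ddℓ (V ω)) ^ 2) ℙ)
    (hLnorm : ∀ z : Fin d → ℝ,
      (∫ ω, (ddℓ (V ω) * (X ω ⬝ᵥ z) ^ 2) ^ 2 ∂ℙ) ^ ((1 : ℝ) / 2)
        ≤ Real.sqrt L * ∫ ω, ddℓ (V ω) * (X ω ⬝ᵥ z) ^ 2 ∂ℙ)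
    (σbar2 : ℝ)
    (hσ : σbar2 = (∫ ω, (dℓ (V ω) ^ 2 / ddℓ (V ω)) ^ 2 ∂ℙ) ^ ((1 : ℝ) / 2)) :
    (∀ z : Fin d → ℝ,
      ∫ ω, dℓ (V ω) ^ 2 * (X ω ⬝ᵥ z) ^ 2 ∂ℙ
        ≤ σbar2 * Real.sqrt L * ∫ ω, ddℓ (V ω) * (X ω ⬝ᵥ z) ^ 2 ∂ℙ) ∧
    (Matrix.PosSemidef
      ((σbar2 * Real.sqrt L) •
          (Matrix.of fun i j => ∫ ω, ddℓ (V ω) * (X ω i * X ω j) ∂ℙ)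
        - Matrix.of fun i j =>
            ∫ ω, (dℓ (V ω) * X ω i - ∫ ω', dℓ (V ω') * X ω' i ∂ℙ)
                * (dℓ (V ω) * X ω j - ∫ ω', dℓ (V ω') * X ω' j ∂ℙ) ∂ℙ)) :=
  portfolio_covariance_hessian_comparison_general dℓ ddℓ hpos V X L hint1 hint2 hint3 hint4 hσint
    hLnorm σbar2 hσ
end
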